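/- arXiv:1712.01004 — 3 statements merged into one kernel-verified Lean document; each statement's English description precedes it below -/
import Mathlib

section
/- Let α > -1/2, 0 < s < 1, δ > 0, λ ∈ ℝ \ {0} and k ∈ ℕ. For -1 < r < 1 define the coefficient c^λ_{k,δ}(r) = (π Γ(α+1) / Γ((α+r+2)/2)²) · ∫_0^∞ e^{-δ(2y+|λ|)} · y^{(α+r+2)/2 + k - 1} · (y+|λ|)^{(r-α-2)/2 - k} dy. Then the following functional equation holds: (2|λ|)^s · [Γ((2k+α+2+s)/2)/Γ((2k+α+2-s)/2)] · c^λ_{k,δ}(-s) = (4δ)^s · (Γ((α+s+2)/2)/Γ((α-s+2)/2))² · c^λ_{k,δ}(s). -/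
/-!
Write `J(p, q; c, L) = ∫₀^∞ y^{p-1} e^{-cy} (y+L)^{-q} dy`. Both coefficients `c^λ_{k,δ}(∓s)` are,
up to Gamma factors and `e^{-δ|λ|}`, such integrals with the roles of
`p = (α-s+2)/2 + k` and `q = (α+s+2)/2 + k` exchanged. Inserting
`Γ(q)(y+L)^{-q} = ∫₀^∞ t^{q-1} e^{-(y+L)t} dt` and applying Fubini gives
`Γ(q) J(p, q; c, L) = Γ(p) J(q, p; L, c)`, and the substitution `t = (c/L) y` turns the right-hand side
into `Γ(p) (c/L)^{q-p} J(q, p; c, L)`. With `c = 2δ`, `L = |λ|` and `q - p = s` this is the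
functional equation.
-/

open Real MeasureTheory

/-- The Laguerre coefficient `c^λ_{k,δ}(r)` of the function
`u_{r,δ}(x,w) = ((δ+x²/2)² + w²)^{-(r+α+2)/2}` (from the proof of Proposition 3.1):
`c^λ_{k,δ}(r) = (πΓ(α+1)/Γ((α+r+2)/2)²)
  ∫_0^∞ e^{-δ(2y+|λ|)} y^{(α+r+2)/2+k-1} (y+|λ|)^{(r-α-2)/2-k} dy`. -/
noncomputable def laguerreCoeff (α δ lam : ℝ) (k : ℕ) (r : ℝ) : ℝ :=
  (π * Real.Gamma (α + 1) / (Real.Gamma ((α + r + 2) / 2)) ^ 2) *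
    ∫ y in Set.Ioi (0 : ℝ),
      Real.exp (-δ * (2 * y + |lam|)) * y ^ ((α + r + 2) / 2 + k - 1) *
        (y + |lam|) ^ ((r - α - 2) / 2 - k)

open Set

/-- Tricomi's integral: `confluentIntegral p q c L = Γ(p) L^{p-q} U(p, p-q+1, cL)`, with `U` the
confluent hypergeometric function of the second kind. -/
noncomputable def confluentIntegral (p q c L : ℝ) : ℝ :=
  ∫ y in Ioi 0, y ^ (p - 1) * exp (-(c * y)) * (y + L) ^ (-q)

noncomputable def confluentKernel (p q c L y t : ℝ) : ℝ :=
  y ^ (p - 1) * exp (-(c * y)) * (t ^ (q - 1) * exp (-(L * t))) * exp (-(y * t))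

section ConfluentIntegral

variable {p q c L : ℝ}

lemma integrableOn_rpow_sub_one_mul_exp_neg_mul (hp : 0 < p) (hc : 0 < c) :
    IntegrableOn (fun y : ℝ => y ^ (p - 1) * exp (-(c * y))) (Ioi 0) := by
  simpa [neg_mul] using
    integrableOn_rpow_mul_exp_neg_mul_rpow (s := p - 1) (by linarith) one_pos hc

lemma confluentKernel_comm (y t : ℝ) :
    confluentKernel p q c L y t = confluentKernel q p L c t y := by
  rw [confluentKernel, confluentKernel, mul_comm y t]
  ring

lemma integral_confluentKernel (hq : 0 < q) {y : ℝ} (hyL : 0 < y + L) :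
    ∫ t in Ioi 0, confluentKernel p q c L y t
      = Gamma q * (y ^ (p - 1) * exp (-(c * y)) * (y + L) ^ (-q)) := by
  have hkernel : ∀ t, confluentKernel p q c L y t
      = y ^ (p - 1) * exp (-(c * y)) * (t ^ (q - 1) * exp (-((y + L) * t))) := fun t => by
    rw [confluentKernel, add_mul, neg_add, exp_add]
    ring
  simp_rw [hkernel]
  rw [integral_const_mul, integral_rpow_mul_exp_neg_mul_Ioi hq hyL, one_div,
    inv_rpow hyL.le, rpow_neg hyL.le]
  ring

lemma integrable_confluentKernel (hp : 0 < p) (hq : 0 < q) (hc : 0 < c) (hL : 0 < L) :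
    Integrable (Function.uncurry (confluentKernel p q c L))
      ((volume.restrict (Ioi 0)).prod (volume.restrict (Ioi 0))) := by
  refine ((integrableOn_rpow_sub_one_mul_exp_neg_mul hp hc).mul_prod
    (integrableOn_rpow_sub_one_mul_exp_neg_mul hq hL)).mono ?_ ?_
  · exact (by unfold Function.uncurry confluentKernel; fun_prop : Measurable _).aestronglyMeasurable
  rw [Measure.prod_restrict]
  filter_upwards [ae_restrict_mem (measurableSet_Ioi.prod measurableSet_Ioi)]
    with ⟨y, t⟩ ⟨hy, ht⟩
  simp only [mem_Ioi] at hy ht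
  have hcoupling : exp (-(y * t)) ≤ 1 := exp_le_one_iff.mpr (by nlinarith)
  simp only [Function.uncurry, confluentKernel, norm_mul, norm_of_nonneg (exp_pos _).le,
    norm_of_nonneg (rpow_nonneg hy.le _), norm_of_nonneg (rpow_nonneg ht.le _)]
  exact mul_le_of_le_one_right (by positivity) hcoupling

lemma Gamma_mul_confluentIntegral_comm (hp : 0 < p) (hq : 0 < q) (hc : 0 < c) (hL : 0 < L) :
    Gamma q * confluentIntegral p q c L = Gamma p * confluentIntegral q p L c := by
  calc Gamma q * confluentIntegral p q c L
      = ∫ y in Ioi 0, ∫ t in Ioi 0, confluentKernel p q c L y t := by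
        rw [confluentIntegral, ← integral_const_mul]
        refine setIntegral_congr_fun measurableSet_Ioi fun y hy => ?_
        exact (integral_confluentKernel hq (by linarith [mem_Ioi.mp hy])).symm
    _ = ∫ t in Ioi 0, ∫ y in Ioi 0, confluentKernel p q c L y t :=
        integral_integral_swap (integrable_confluentKernel hp hq hc hL)
    _ = Gamma p * confluentIntegral q p L c := by
        rw [confluentIntegral, ← integral_const_mul]
        refine setIntegral_congr_fun measurableSet_Ioi fun t ht => ?_
        simp_rw [confluentKernel_comm (p := p)]
        exact integral_confluentKernel hp (by linarith [mem_Ioi.mp ht])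

lemma confluentIntegral_rescale {ρ : ℝ} (hρ : 0 < ρ) (hL : 0 ≤ L) :
    confluentIntegral p q c (ρ * L) = ρ ^ (p - q) * confluentIntegral p q (ρ * c) L := by
  set g : ℝ → ℝ := fun y => y ^ (p - 1) * exp (-(c * y)) * (y + ρ * L) ^ (-q)
  have hsubst := integral_comp_mul_left_Ioi g 0 hρ
  rw [mul_zero, smul_eq_mul] at hsubst
  have hscaled : ∀ x ∈ Ioi (0 : ℝ),
      g (ρ * x) = ρ ^ (p - 1 - q) * (x ^ (p - 1) * exp (-(ρ * c * x)) * (x + L) ^ (-q)) := by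
    intro x hx
    have hxL : 0 ≤ x + L := by linarith [mem_Ioi.mp hx]
    simp only [g]
    rw [← mul_add, mul_rpow hρ.le (mem_Ioi.mp hx).le, mul_rpow hρ.le hxL, sub_eq_add_neg (p - 1),
      rpow_add hρ]
    ring_nf
  calc confluentIntegral p q c (ρ * L)
      = ρ * (ρ⁻¹ * ∫ y in Ioi 0, g y) := by
        rw [← mul_assoc, mul_inv_cancel₀ hρ.ne', one_mul, confluentIntegral]
    _ = ρ * (ρ ^ (p - 1 - q) * confluentIntegral p q (ρ * c) L) := by
        rw [← hsubst, setIntegral_congr_fun measurableSet_Ioi hscaled, integral_const_mul,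
          confluentIntegral]
    _ = ρ ^ (p - q) * confluentIntegral p q (ρ * c) L := by
        rw [show p - q = 1 + (p - 1 - q) by ring, rpow_add hρ, rpow_one, mul_assoc]

lemma Gamma_mul_confluentIntegral (hp : 0 < p) (hq : 0 < q) (hc : 0 < c) (hL : 0 < L) :
    Gamma q * confluentIntegral p q c L
      = Gamma p * (c / L) ^ (q - p) * confluentIntegral q p c L := by
  have hρ : 0 < c / L := div_pos hc hL
  rw [Gamma_mul_confluentIntegral_comm hp hq hc hL, mul_assoc]
  conv_lhs => rw [← div_mul_cancel₀ c hL.ne']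
  rw [confluentIntegral_rescale hρ hL.le, div_mul_cancel₀ c hL.ne']

end ConfluentIntegral

theorem laguerreCoeff_eq (α δ lam : ℝ) (k : ℕ) (r : ℝ) :
    laguerreCoeff α δ lam k r
      = π * Gamma (α + 1) / Gamma ((α + r + 2) / 2) ^ 2 * exp (-(δ * |lam|)) *
        confluentIntegral ((α + r + 2) / 2 + k) ((α - r + 2) / 2 + k) (2 * δ) |lam| := by
  rw [laguerreCoeff, confluentIntegral, mul_assoc _ (exp _), ← integral_const_mul (exp _)]
  congr 1
  refine setIntegral_congr_fun measurableSet_Ioi fun y _ => ?_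
  rw [show (r - α - 2) / 2 - k = -((α - r + 2) / 2 + k) by ring,
    show -δ * (2 * y + |lam|) = -(2 * δ * y) + -(δ * |lam|) by ring, exp_add]
  ring

/-- Proposition 3.1 (in terms of Laguerre coefficients): the functional equation
`(2|λ|)^s [Γ((2k+α+2+s)/2)/Γ((2k+α+2-s)/2)] c^λ_{k,δ}(-s)
  = (4δ)^s (Γ((α+s+2)/2)/Γ((α-s+2)/2))² c^λ_{k,δ}(s)`. -/
theorem laguerre_coeff_functional_equation (α s δ lam : ℝ) (k : ℕ)
    (hα : -1/2 < α) (hs0 : 0 < s) (hs1 : s < 1) (hδ : 0 < δ) (hlam : lam ≠ 0) :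
    (2 * |lam|) ^ s *
        (Real.Gamma ((2 * k + α + 2 + s) / 2) / Real.Gamma ((2 * k + α + 2 - s) / 2)) *
        laguerreCoeff α δ lam k (-s) =
      (4 * δ) ^ s *
        (Real.Gamma ((α + s + 2) / 2) / Real.Gamma ((α - s + 2) / 2)) ^ 2 *
        laguerreCoeff α δ lam k s := by
  have hL : 0 < |lam| := abs_pos.mpr hlam
  have hk : (0 : ℝ) ≤ k := k.cast_nonneg
  have hp : 0 < (α - s + 2) / 2 + k := by linarith
  have hq : 0 < (α + s + 2) / 2 + k := by linarith
  have hswap := Gamma_mul_confluentIntegral hp hq (by positivity : 0 < 2 * δ) hL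
  rw [show (α + s + 2) / 2 + k - ((α - s + 2) / 2 + k) = s by ring] at hswap
  have hscale : (4 * δ) ^ s = (2 * |lam|) ^ s * (2 * δ / |lam|) ^ s := by
    rw [← mul_rpow (by positivity) (by positivity)]
    field_simp
    ring_nf
  rw [laguerreCoeff_eq, laguerreCoeff_eq, hscale,
    show (2 * k + α + 2 + s) / 2 = (α + s + 2) / 2 + k by ring,
    show (2 * k + α + 2 - s) / 2 = (α - s + 2) / 2 + k by ring,
    show α + -s + 2 = α - s + 2 by ring, show α - -s + 2 = α + s + 2 by ring]
  have hΓp := (Gamma_pos_of_pos hp).ne'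
  have hΓq₀ := (Gamma_pos_of_pos (by linarith : 0 < (α + s + 2) / 2)).ne'
  generalize Gamma ((α - s + 2) / 2 + k) = Γp at *
  generalize Gamma ((α + s + 2) / 2 + k) = Γq at *
  generalize confluentIntegral ((α - s + 2) / 2 + k) ((α + s + 2) / 2 + k) (2 * δ) |lam| = J at *
  generalize confluentIntegral ((α + s + 2) / 2 + k) ((α - s + 2) / 2 + k) (2 * δ) |lam| = J' at *
  field_simp
  linear_combination Gamma (α + 1) / Gamma ((α - s + 2) / 2) ^ 2 * hswap
end

section
/- Let 0 < s < 1 and μ ≥ 0. Then s · ∫_0^∞ (cosh t - e^{-μt}) · (sinh t)^{-s-1} dt = 2^s · Γ(1-s) · Γ(μ/2 + (1+s)/2) / Γ(μ/2 + (1-s)/2), the integral being absolutely convergent. -/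
/-!
Substituting `v = exp (-2 t)` turns the integral into
`2 ^ (s - 1) ∫₀¹ ((v ^ (p - 1) - v ^ (q - 1)) + (v ^ p - v ^ (q - 1))) (1 - v) ^ (-s - 1) dv`
with `p = s / 2`, `q = μ / 2 + (1 + s) / 2`. Put `R x = Γ x / Γ (x - s)`. For `a, c > 0`,
`s ∫₀¹ (v ^ (a - 1) - v ^ (c - 1)) (1 - v) ^ (-s - 1) dv = Γ (1 - s) (R c - R a)`:
expanding `(1 - v)⁻¹ = ∑ v ^ k`, the `k`-th term is `B (a + k, 1 - s) - B (c + k, 1 - s)`, and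
`s B (x, 1 - s) = Γ (1 - s) (R (x + 1) - R x)`, so the partial sums telescope to
`Γ (1 - s) ((R (a + N) - R a) - (R (c + N) - R c))`. Log-convexity of `Γ` (Gautschi's
inequality) gives `R x = x ^ s + o(1)`, hence `R (N + a) - R (N + c) → 0`; for `a ≤ c` the terms
are nonnegative and monotone convergence applies. Finally `R (p + 1) = -R p` because `2 p = s`,
so the two `p`-terms cancel and only `2 Γ (1 - s) R q` survives.
-/

open MeasureTheory Real Set Filter Topology

noncomputable def gammaRatio (s x : ℝ) : ℝ := Gamma x / Gamma (x - s)

lemma gammaRatio_add_one_sub {s c : ℝ} (hc : c ≠ 0) (hcs : s < c + 1) :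
    gammaRatio s (c + 1) - gammaRatio s c = s * Gamma c / Gamma (c + 1 - s) := by
  have hpos : 0 < Gamma (c + 1 - s) := Gamma_pos_of_pos (by linarith)
  -- for `c = s` this holds because `Γ 0 = 0` makes `gammaRatio s s = 0`
  have hratio : gammaRatio s c = (c - s) * Gamma c / Gamma (c + 1 - s) := by
    rcases eq_or_ne (c - s) 0 with h | h
    · simp [gammaRatio, h]
    · rw [show c + 1 - s = c - s + 1 by ring, Gamma_add_one h] at hpos ⊢
      have := right_ne_zero_of_mul hpos.ne'
      rw [gammaRatio]
      field_simp
  rw [hratio, gammaRatio, Gamma_add_one hc]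
  ring

lemma gammaRatio_half_add_one {s : ℝ} (hs : s ≠ 0) :
    gammaRatio s (s / 2 + 1) = -gammaRatio s (s / 2) := by
  have hs2 : s / 2 ≠ 0 := by positivity
  rw [gammaRatio, gammaRatio, show s / 2 + 1 - s = -(s / 2) + 1 by ring,
    show s / 2 - s = -(s / 2) by ring, Gamma_add_one hs2, Gamma_add_one (neg_ne_zero.2 hs2),
    mul_div_mul_comm, div_neg_self hs2, neg_one_mul]

lemma Gamma_add_le_Gamma_mul_rpow {x s : ℝ} (hx : 0 < x) (hs0 : 0 < s) (hs1 : s < 1) :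
    Gamma (x + s) ≤ Gamma x * x ^ s := by
  have h := Gamma_mul_add_mul_le_rpow_Gamma_mul_rpow_Gamma (s := x) (t := x + 1)
    hx (by linarith) (sub_pos.2 hs1) hs0 (sub_add_cancel 1 s)
  rwa [show (1 - s) * x + s * (x + 1) = x + s by ring, Gamma_add_one hx.ne',
    mul_rpow hx.le (Gamma_pos_of_pos hx).le, mul_left_comm,
    ← rpow_add (Gamma_pos_of_pos hx), sub_add_cancel, rpow_one, mul_comm] at h

lemma gammaRatio_le {s y : ℝ} (hs0 : 0 < s) (hs1 : s < 1) (hy : s < y) :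
    gammaRatio s y ≤ (y - s) ^ s := by
  have h := Gamma_add_le_Gamma_mul_rpow (sub_pos.2 hy) hs0 hs1
  rw [sub_add_cancel, mul_comm] at h
  exact div_le_of_le_mul₀ (Gamma_pos_of_pos (sub_pos.2 hy)).le (by positivity) h

lemma le_gammaRatio {s y : ℝ} (hs0 : 0 < s) (hs1 : s < 1) (hy : s < y) :
    y ^ s - s * y ^ (s - 1) ≤ gammaRatio s y := by
  have hy0 : 0 < y := hs0.trans hy
  -- the lower bound is the upper bound for the complementary exponent `1 - s`
  have h := Gamma_add_le_Gamma_mul_rpow hy0 (sub_pos.2 hs1) (by linarith)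
  rw [show y + (1 - s) = (y - s) + 1 by ring, Gamma_add_one (sub_pos.2 hy).ne'] at h
  have hlow : (y - s) * y ^ (s - 1) ≤ gammaRatio s y := by
    rw [gammaRatio, le_div_iff₀ (Gamma_pos_of_pos (sub_pos.2 hy))]
    calc (y - s) * y ^ (s - 1) * Gamma (y - s) = (y - s) * Gamma (y - s) * y ^ (s - 1) := by ring
      _ ≤ Gamma y * y ^ (1 - s) * y ^ (s - 1) := by gcongr
      _ = Gamma y := by rw [mul_assoc, ← rpow_add hy0]; simp
  rwa [sub_mul, ← rpow_one_add' hy0.le (by linarith), add_sub_cancel] at hlow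

lemma rpow_add_sub_rpow_le {x a s : ℝ} (hx : 0 < x) (ha : -x ≤ a) (hs0 : 0 ≤ s)
    (hs1 : s ≤ 1) :
    (x + a) ^ s - x ^ s ≤ s * a * x ^ (s - 1) := by
  have hax : -1 ≤ a / x := by rwa [le_div_iff₀ hx, neg_one_mul]
  have h := rpow_one_add_le_one_add_mul_self hax hs0 hs1
  have hxa : x + a = x * (1 + a / x) := by field_simp
  rw [hxa, mul_rpow hx.le (by linarith), rpow_sub_one hx.ne']
  calc x ^ s * (1 + a / x) ^ s - x ^ s ≤ x ^ s * (1 + s * (a / x)) - x ^ s := by gcongr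
    _ = s * a * (x ^ s / x) := by ring

lemma tendsto_rpow_sub_one_atTop {s : ℝ} (hs : s < 1) :
    Tendsto (fun x : ℝ => x ^ (s - 1)) atTop (𝓝 0) := by
  simpa using tendsto_rpow_neg_atTop (y := 1 - s) (by linarith)

lemma tendsto_rpow_add_sub_rpow {s : ℝ} (hs0 : 0 ≤ s) (hs1 : s < 1) (a : ℝ) :
    Tendsto (fun x : ℝ => (x + a) ^ s - x ^ s) atTop (𝓝 0) := by
  have hlow : Tendsto (fun x : ℝ => s * a * (x + a) ^ (s - 1)) atTop (𝓝 0) := by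
    simpa using ((tendsto_rpow_sub_one_atTop hs1).comp
      (tendsto_atTop_add_const_right _ a tendsto_id)).const_mul (s * a)
  have hup : Tendsto (fun x : ℝ => s * a * x ^ (s - 1)) atTop (𝓝 0) := by
    simpa using (tendsto_rpow_sub_one_atTop hs1).const_mul (s * a)
  refine tendsto_of_tendsto_of_tendsto_of_le_of_le' hlow hup ?_ ?_
  all_goals filter_upwards [eventually_gt_atTop (|a|)] with x hx
  all_goals obtain ⟨hxa, hax⟩ := abs_lt.mp hx
  · have h := rpow_add_sub_rpow_le (a := -a) (by linarith : 0 < x + a) (by linarith) hs0 hs1.le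
    rw [add_neg_cancel_right] at h
    linarith
  · exact rpow_add_sub_rpow_le (by linarith) (by linarith) hs0 hs1.le

lemma tendsto_gammaRatio_sub_rpow {s : ℝ} (hs0 : 0 < s) (hs1 : s < 1) :
    Tendsto (fun y => gammaRatio s y - y ^ s) atTop (𝓝 0) := by
  have hlow : Tendsto (fun y : ℝ => -(s * y ^ (s - 1))) atTop (𝓝 0) := by
    simpa using ((tendsto_rpow_sub_one_atTop hs1).const_mul s).neg
  have hup := tendsto_rpow_add_sub_rpow hs0.le hs1 (-s)
  refine tendsto_of_tendsto_of_tendsto_of_le_of_le' hlow hup ?_ ?_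
  · filter_upwards [eventually_gt_atTop s] with y hy
    linarith [le_gammaRatio hs0 hs1 hy]
  · filter_upwards [eventually_gt_atTop s] with y hy
    rw [← sub_eq_add_neg]
    linarith [gammaRatio_le hs0 hs1 hy]

lemma tendsto_gammaRatio_add_sub_gammaRatio_add {s : ℝ} (hs0 : 0 < s) (hs1 : s < 1) (a c : ℝ) :
    Tendsto (fun x => gammaRatio s (x + a) - gammaRatio s (x + c)) atTop (𝓝 0) := by
  have shift (b : ℝ) := (tendsto_gammaRatio_sub_rpow hs0 hs1).comp
    (tendsto_atTop_add_const_right _ b tendsto_id)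
  have hac := (tendsto_rpow_add_sub_rpow hs0.le hs1 a).sub
    (tendsto_rpow_add_sub_rpow hs0.le hs1 c)
  simpa using (((shift a).sub (shift c)).add hac).congr fun x => by
    simp only [Function.comp_apply, id]; ring

lemma ofReal_rpow_mul_one_sub_rpow {a b v : ℝ} (hv : v ∈ Icc (0 : ℝ) 1) :
    ((v ^ (a - 1) * (1 - v) ^ (b - 1) : ℝ) : ℂ)
      = (v : ℂ) ^ ((a : ℂ) - 1) * (1 - (v : ℂ)) ^ ((b : ℂ) - 1) := by
  rw [Complex.ofReal_mul, Complex.ofReal_cpow hv.1, Complex.ofReal_cpow (sub_nonneg.2 hv.2)]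
  push_cast
  rfl

lemma integrableOn_rpow_mul_one_sub_rpow {a b : ℝ} (ha : 0 < a) (hb : 0 < b) :
    IntegrableOn (fun v : ℝ => v ^ (a - 1) * (1 - v) ^ (b - 1)) (Ioo 0 1) := by
  have h := Complex.betaIntegral_convergent (u := a) (v := b) (by simpa) (by simpa)
  rw [intervalIntegrable_iff_integrableOn_Ioc_of_le zero_le_one] at h
  refine IntegrableOn.congr_fun (h.mono_set Ioo_subset_Ioc_self).re (fun v hv => ?_)
    measurableSet_Ioo
  rw [← ofReal_rpow_mul_one_sub_rpow (Ioo_subset_Icc_self hv)]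
  exact Complex.ofReal_re _

lemma integral_rpow_mul_one_sub_rpow {a b : ℝ} (ha : 0 < a) (hb : 0 < b) :
    ∫ v in Ioo (0 : ℝ) 1, v ^ (a - 1) * (1 - v) ^ (b - 1)
      = Gamma a * Gamma b / Gamma (a + b) := by
  have h := Complex.betaIntegral_eq_Gamma_mul_div a b (by simpa) (by simpa)
  rw [Complex.betaIntegral, ← intervalIntegral.integral_congr (fun v hv =>
    ofReal_rpow_mul_one_sub_rpow (uIcc_of_le (zero_le_one' ℝ) ▸ hv)),
    intervalIntegral.integral_ofReal, intervalIntegral.integral_of_le zero_le_one,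
    integral_Ioc_eq_integral_Ioo] at h
  simp only [← Complex.ofReal_add, Complex.Gamma_ofReal] at h
  exact_mod_cast h

lemma integral_rpow_mul_one_sub_rpow_neg {s c : ℝ} (hs : s < 1) (hc : 0 < c) :
    s * ∫ v in Ioo (0 : ℝ) 1, v ^ (c - 1) * (1 - v) ^ (-s)
      = Gamma (1 - s) * (gammaRatio s (c + 1) - gammaRatio s c) := by
  have h := integral_rpow_mul_one_sub_rpow hc (sub_pos.2 hs)
  rw [sub_sub_cancel_left, show c + (1 - s) = c + 1 - s by ring] at h
  rw [h, gammaRatio_add_one_sub hc.ne' (by linarith)]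
  ring

lemma integrable_of_tendsto_integral_of_nonneg {μ : Measure ℝ} {f : ℕ → ℝ → ℝ} {F : ℝ → ℝ}
    {L : ℝ}    (hf : ∀ n, Integrable (f n) μ) (hf0 : ∀ n, 0 ≤ᵐ[μ] f n)
    (h_tendsto : ∀ᵐ x ∂μ, Tendsto (fun n => f n x) atTop (𝓝 (F x)))
    (hL : Tendsto (fun n => ∫ x, f n x ∂μ) atTop (𝓝 L)) : Integrable F μ := by
  refine integrable_of_tendsto h_tendsto (fun n => (hf n).1) ?_
  have hlint (n : ℕ) : ∫⁻ x, ‖f n x‖ₑ ∂μ = ENNReal.ofReal (∫ x, f n x ∂μ) := by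
    rw [ofReal_integral_eq_lintegral_ofReal (hf n) (hf0 n)]
    refine lintegral_congr_ae ?_
    filter_upwards [hf0 n] with x hx
    exact Real.enorm_of_nonneg hx
  rw [funext hlint, (ENNReal.tendsto_ofReal hL).liminf_eq]
  exact ENNReal.ofReal_ne_top

lemma hasSum_rpow_sub_rpow_mul_one_sub_rpow {s a c v : ℝ} (hv : v ∈ Ioo (0 : ℝ) 1) :
    HasSum (fun k : ℕ => (v ^ (a + k - 1) - v ^ (c + k - 1)) * (1 - v) ^ (-s))
      ((v ^ (a - 1) - v ^ (c - 1)) * (1 - v) ^ (-s - 1)) := by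
  have hgeom := (hasSum_geometric_of_lt_one hv.1.le hv.2).mul_left
    ((v ^ (a - 1) - v ^ (c - 1)) * (1 - v) ^ (-s))
  rw [mul_assoc, ← rpow_neg_one, ← rpow_add (sub_pos.2 hv.2), ← sub_eq_add_neg] at hgeom
  refine hgeom.congr_fun fun k => ?_
  rw [add_sub_right_comm a, add_sub_right_comm c, rpow_add hv.1, rpow_add hv.1, rpow_natCast]
  ring

lemma integrableOn_rpow_mul_one_sub_rpow_neg {s c : ℝ} (hs : s < 1) (hc : 0 < c) :
    IntegrableOn (fun v : ℝ => v ^ (c - 1) * (1 - v) ^ (-s)) (Ioo 0 1) := by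
  simpa using integrableOn_rpow_mul_one_sub_rpow hc (sub_pos.2 hs)

lemma integrableOn_rpow_sub_rpow_mul_one_sub_rpow_neg {s a c : ℝ} (hs : s < 1) (ha : 0 < a)
    (hc : 0 < c) :
    IntegrableOn (fun v : ℝ => (v ^ (a - 1) - v ^ (c - 1)) * (1 - v) ^ (-s)) (Ioo 0 1) :=
  ((integrableOn_rpow_mul_one_sub_rpow_neg hs ha).sub
    (integrableOn_rpow_mul_one_sub_rpow_neg hs hc)).congr_fun
      (fun _ _ => (sub_mul _ _ _).symm) measurableSet_Ioo

lemma integral_rpow_sub_rpow_mul_one_sub_rpow_neg {s a c : ℝ} (hs : s < 1) (ha : 0 < a)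
    (hc : 0 < c) :
    s * ∫ v in Ioo (0 : ℝ) 1, (v ^ (a - 1) - v ^ (c - 1)) * (1 - v) ^ (-s)
      = Gamma (1 - s) * ((gammaRatio s (a + 1) - gammaRatio s a)
          - (gammaRatio s (c + 1) - gammaRatio s c)) := by
  simp_rw [sub_mul]
  rw [integral_sub (integrableOn_rpow_mul_one_sub_rpow_neg hs ha)
      (integrableOn_rpow_mul_one_sub_rpow_neg hs hc), mul_sub,
    integral_rpow_mul_one_sub_rpow_neg hs ha,
    integral_rpow_mul_one_sub_rpow_neg hs hc]
  ring

lemma integral_sum_range_rpow_sub_rpow_mul_one_sub_rpow_neg {s a c : ℝ} (hs : s < 1) (ha : 0 < a)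
    (hc : 0 < c) (N : ℕ) :
    s * ∫ v in Ioo (0 : ℝ) 1,
        ∑ k ∈ Finset.range N, (v ^ (a + k - 1) - v ^ (c + k - 1)) * (1 - v) ^ (-s)
      = Gamma (1 - s) * ((gammaRatio s (a + N) - gammaRatio s a)
          - (gammaRatio s (c + N) - gammaRatio s c)) := by
  have hk (b : ℝ) (hb : 0 < b) (k : ℕ) : 0 < b + k := by positivity
  rw [integral_finsetSum _ fun k _ =>
      integrableOn_rpow_sub_rpow_mul_one_sub_rpow_neg hs (hk a ha k) (hk c hc k),
    Finset.mul_sum]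
  simp_rw [integral_rpow_sub_rpow_mul_one_sub_rpow_neg hs (hk a ha _) (hk c hc _)]
  have htelescope (b : ℝ) :
      ∑ k ∈ Finset.range N, (gammaRatio s (b + k + 1) - gammaRatio s (b + k))
        = gammaRatio s (b + N) - gammaRatio s b := by
    simpa [add_assoc] using Finset.sum_range_sub (fun k : ℕ => gammaRatio s (b + k)) N
  rw [← Finset.mul_sum, Finset.sum_sub_distrib, htelescope, htelescope]

lemma integrableOn_and_integral_rpow_sub_rpow_mul_one_sub_rpow_neg_sub_one_of_le {s a c : ℝ}
    (hs0 : 0 < s) (hs1 : s < 1) (ha : 0 < a) (hac : a ≤ c) :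
    IntegrableOn (fun v : ℝ => (v ^ (a - 1) - v ^ (c - 1)) * (1 - v) ^ (-s - 1)) (Ioo 0 1) ∧
    s * ∫ v in Ioo (0 : ℝ) 1, (v ^ (a - 1) - v ^ (c - 1)) * (1 - v) ^ (-s - 1)
      = Gamma (1 - s) * (gammaRatio s c - gammaRatio s a) := by
  have hc : 0 < c := ha.trans_le hac
  set term : ℕ → ℝ → ℝ := fun k v => (v ^ (a + k - 1) - v ^ (c + k - 1)) * (1 - v) ^ (-s)
  set L := Gamma (1 - s) * (gammaRatio s c - gammaRatio s a) / s
  have hterm_nonneg (k : ℕ) (v : ℝ) (hv : v ∈ Ioo (0 : ℝ) 1) : 0 ≤ term k v :=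
    mul_nonneg (sub_nonneg.2 (rpow_le_rpow_of_exponent_ge hv.1 hv.2.le (by linarith)))
      (rpow_nonneg (sub_pos.2 hv.2).le _)
  have hint (N : ℕ) : IntegrableOn (fun v => ∑ k ∈ Finset.range N, term k v) (Ioo 0 1) :=
    integrable_finsetSum _ fun k _ => integrableOn_rpow_sub_rpow_mul_one_sub_rpow_neg hs1
      (by positivity) (by positivity)
  have hlim : Tendsto (fun N : ℕ => ∫ v in Ioo (0 : ℝ) 1, ∑ k ∈ Finset.range N, term k v)
      atTop (𝓝 L) := by
    have h := ((tendsto_gammaRatio_add_sub_gammaRatio_add hs0 hs1 a c).comp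
      tendsto_natCast_atTop_atTop).add_const (gammaRatio s c - gammaRatio s a)
      |>.const_mul (Gamma (1 - s)) |>.div_const s
    rw [zero_add] at h
    refine h.congr fun N => ?_
    rw [div_eq_iff hs0.ne', mul_comm _ s,
      integral_sum_range_rpow_sub_rpow_mul_one_sub_rpow_neg hs1 ha hc]
    simp only [Function.comp_apply, add_comm (N : ℝ)]
    ring
  have hmono : ∀ᵐ v ∂volume.restrict (Ioo (0 : ℝ) 1),
      Monotone fun N => ∑ k ∈ Finset.range N, term k v :=
    ae_restrict_of_forall_mem measurableSet_Ioo fun v hv =>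
      monotone_nat_of_le_succ fun N => by
        rw [Finset.sum_range_succ]; exact le_add_of_nonneg_right (hterm_nonneg N v hv)
  have htendsto : ∀ᵐ v ∂volume.restrict (Ioo (0 : ℝ) 1), Tendsto
      (fun N => ∑ k ∈ Finset.range N, term k v) atTop
      (𝓝 ((v ^ (a - 1) - v ^ (c - 1)) * (1 - v) ^ (-s - 1))) :=
    ae_restrict_of_forall_mem measurableSet_Ioo fun _ hv =>
      (hasSum_rpow_sub_rpow_mul_one_sub_rpow hv).tendsto_sum_nat
  have hF := integrable_of_tendsto_integral_of_nonneg hint (fun N => ae_restrict_of_forall_mem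
    measurableSet_Ioo fun v hv => Finset.sum_nonneg fun k _ => hterm_nonneg k v hv) htendsto hlim
  refine ⟨hF, ?_⟩
  rw [tendsto_nhds_unique (integral_tendsto_of_tendsto_of_monotone hint hF hmono htendsto) hlim,
    mul_div_cancel₀ _ hs0.ne']

lemma integrableOn_and_integral_rpow_sub_rpow_mul_one_sub_rpow_neg_sub_one {s a c : ℝ}
    (hs0 : 0 < s) (hs1 : s < 1) (ha : 0 < a) (hc : 0 < c) :
    IntegrableOn (fun v : ℝ => (v ^ (a - 1) - v ^ (c - 1)) * (1 - v) ^ (-s - 1)) (Ioo 0 1) ∧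
    s * ∫ v in Ioo (0 : ℝ) 1, (v ^ (a - 1) - v ^ (c - 1)) * (1 - v) ^ (-s - 1)
      = Gamma (1 - s) * (gammaRatio s c - gammaRatio s a) := by
  rcases le_total a c with hac | hca
  · exact
      integrableOn_and_integral_rpow_sub_rpow_mul_one_sub_rpow_neg_sub_one_of_le hs0 hs1 ha hac
  obtain ⟨hint, hval⟩ :=
    integrableOn_and_integral_rpow_sub_rpow_mul_one_sub_rpow_neg_sub_one_of_le hs0 hs1 hc hca
  have hswap : (fun v : ℝ => (v ^ (a - 1) - v ^ (c - 1)) * (1 - v) ^ (-s - 1))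
      = fun v => -((v ^ (c - 1) - v ^ (a - 1)) * (1 - v) ^ (-s - 1)) :=
    funext fun v => by ring
  rw [hswap, integral_neg, mul_neg, hval]
  exact ⟨hint.neg, by ring⟩

lemma image_exp_neg_mul_Ioi {b : ℝ} (hb : 0 < b) :
    (fun t => exp (-b * t)) '' Ioi 0 = Ioo 0 1 := by
  ext v
  constructor
  · rintro ⟨t, ht, rfl⟩
    exact ⟨exp_pos _, exp_lt_one_iff.2 (by nlinarith [mem_Ioi.1 ht])⟩
  · rintro ⟨hv0, hv1⟩
    refine ⟨-log v / b, div_pos (neg_pos.2 (log_neg hv0 hv1)) hb, ?_⟩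
    dsimp only
    rw [show -b * (-log v / b) = log v by field_simp, exp_log hv0]

lemma hasDerivAt_exp_neg_mul (b t : ℝ) :
    HasDerivAt (fun t => exp (-b * t)) (-b * exp (-b * t)) t := by
  simpa [mul_comm] using ((hasDerivAt_id t).const_mul (-b)).exp

lemma injective_exp_neg_mul {b : ℝ} (hb : b ≠ 0) : Function.Injective fun t => exp (-b * t) :=
  fun _ _ h => mul_left_cancel₀ (neg_ne_zero.2 hb) (exp_injective h)

lemma abs_neg_mul_exp {b : ℝ} (hb : 0 ≤ b) (t : ℝ) :
    |-b * exp (-b * t)| = b * exp (-b * t) := by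
  rw [abs_mul, abs_neg, abs_of_nonneg hb, abs_of_pos (exp_pos _)]

lemma integrableOn_Ioi_comp_exp_neg_mul_iff {b : ℝ} (hb : 0 < b) (G : ℝ → ℝ) :
    IntegrableOn (fun t => b * exp (-b * t) * G (exp (-b * t))) (Ioi 0) ↔
      IntegrableOn G (Ioo 0 1) := by
  rw [← image_exp_neg_mul_Ioi hb, integrableOn_image_iff_integrableOn_abs_deriv_smul
    measurableSet_Ioi (fun t _ => (hasDerivAt_exp_neg_mul b t).hasDerivWithinAt)
    (injective_exp_neg_mul hb.ne').injOn]
  simp only [abs_neg_mul_exp hb.le, smul_eq_mul]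

lemma integral_Ioi_comp_exp_neg_mul {b : ℝ} (hb : 0 < b) (G : ℝ → ℝ) :
    ∫ t in Ioi 0, b * exp (-b * t) * G (exp (-b * t)) = ∫ v in Ioo 0 1, G v := by
  rw [← image_exp_neg_mul_Ioi hb, integral_image_eq_integral_abs_deriv_smul
    measurableSet_Ioi (fun t _ => (hasDerivAt_exp_neg_mul b t).hasDerivWithinAt)
    (injective_exp_neg_mul hb.ne').injOn]
  simp only [abs_neg_mul_exp hb.le, smul_eq_mul]

lemma cosh_sub_exp_mul_sinh_rpow {s μ t v : ℝ} (ht : 0 < t) (hv : exp (-2 * t) = v) :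
    (cosh t - exp (-μ * t)) * sinh t ^ (-s - 1) =
      2 * v * (2 ^ (s - 1) *
        ((v ^ (s / 2 - 1) - v ^ (μ / 2 + (1 + s) / 2 - 1)) * (1 - v) ^ (-s - 1)
          + (v ^ (s / 2 + 1 - 1) - v ^ (μ / 2 + (1 + s) / 2 - 1)) * (1 - v) ^ (-s - 1))) := by
  subst hv
  have hv1 : 0 < 1 - exp (-2 * t) := sub_pos.2 (exp_lt_one_iff.2 (by linarith))
  have hsinh : sinh t = exp t / 2 * (1 - exp (-2 * t)) := by
    rw [sinh_eq, mul_sub, mul_one, div_mul_eq_mul_div, ← exp_add]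
    ring_nf
  have hpow (x : ℝ) : exp (-2 * t) ^ x = exp (-2 * t * x) := (exp_mul _ _).symm
  rw [hsinh, mul_rpow (by positivity) hv1.le, div_rpow (exp_pos t).le zero_le_two, ← exp_mul,
    rpow_sub_one two_ne_zero, rpow_sub_one two_ne_zero, rpow_neg zero_le_two, cosh_eq,
    hpow, hpow, hpow]
  have m1 : exp t * exp (t * (-s - 1)) = exp (-2 * t) * exp (-2 * t * (s / 2 - 1)) := by
    rw [← exp_add, ← exp_add]; ring_nf
  have m2 : exp (-t) * exp (t * (-s - 1)) = exp (-2 * t) * exp (-2 * t * (s / 2 + 1 - 1)) := by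
    rw [← exp_add, ← exp_add]; ring_nf
  have m3 : exp (-μ * t) * exp (t * (-s - 1))
      = exp (-2 * t) * exp (-2 * t * (μ / 2 + (1 + s) / 2 - 1)) := by
    rw [← exp_add, ← exp_add]; ring_nf
  rw [div_div_eq_mul_div, div_inv_eq_mul]
  linear_combination (1 - exp (-2 * t)) ^ (-s - 1) * 2 ^ s * (m1 + m2 - 2 * m3)

/-- Subordination identity from the proof of Theorem 3.2:
`s ∫_0^∞ (cosh t - e^{-μt}) (sinh t)^{-s-1} dt
  = 2^s Γ(1-s) Γ(μ/2 + (1+s)/2) / Γ(μ/2 + (1-s)/2)`,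
the integral being absolutely convergent. -/
theorem cosh_subordination_identity (s μ : ℝ) (hs0 : 0 < s) (hs1 : s < 1) (hμ : 0 ≤ μ) :
    IntegrableOn
      (fun t : ℝ => (Real.cosh t - Real.exp (-μ * t)) * (Real.sinh t) ^ (-s - 1))
      (Set.Ioi (0 : ℝ)) ∧
    s * ∫ t in Set.Ioi (0 : ℝ),
        (Real.cosh t - Real.exp (-μ * t)) * (Real.sinh t) ^ (-s - 1) =
      2 ^ s * Real.Gamma (1 - s) *
        Real.Gamma (μ / 2 + (1 + s) / 2) / Real.Gamma (μ / 2 + (1 - s) / 2) := by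
  set q := μ / 2 + (1 + s) / 2
  have hq : 0 < q := by positivity
  obtain ⟨hint₁, hval₁⟩ := integrableOn_and_integral_rpow_sub_rpow_mul_one_sub_rpow_neg_sub_one
    (a := s / 2) hs0 hs1 (by positivity) hq
  obtain ⟨hint₂, hval₂⟩ := integrableOn_and_integral_rpow_sub_rpow_mul_one_sub_rpow_neg_sub_one
    (a := s / 2 + 1) hs0 hs1 (by positivity) hq
  set G : ℝ → ℝ := fun v => 2 ^ (s - 1) *
    ((v ^ (s / 2 - 1) - v ^ (q - 1)) * (1 - v) ^ (-s - 1)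
      + (v ^ (s / 2 + 1 - 1) - v ^ (q - 1)) * (1 - v) ^ (-s - 1))
  have hsubst : EqOn (fun t => (cosh t - exp (-μ * t)) * sinh t ^ (-s - 1))
      (fun t => 2 * exp (-2 * t) * G (exp (-2 * t))) (Ioi 0) :=
    fun t ht => cosh_sub_exp_mul_sinh_rpow ht rfl
  refine ⟨(integrableOn_congr_fun hsubst measurableSet_Ioi).2
    ((integrableOn_Ioi_comp_exp_neg_mul_iff two_pos _).2 ((hint₁.add hint₂).const_mul _)), ?_⟩
  rw [setIntegral_congr_fun measurableSet_Ioi hsubst, integral_Ioi_comp_exp_neg_mul two_pos G,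
    integral_const_mul, integral_add hint₁ hint₂, mul_left_comm, mul_add, hval₁, hval₂,
    gammaRatio_half_add_one hs0.ne', gammaRatio, show q - s = μ / 2 + (1 - s) / 2 by ring,
    rpow_sub_one two_ne_zero]
  ring
end

section
/- Let 0 < s < 1. Then ∫_0^∞ (cosh t - 1) · (sinh t)^{-s-1} dt = ∫_0^∞ (1 - (t / sinh t)^{s+1}) · t^{-s-1} dt; equivalently, lim_{δ → 0⁺} ∫_δ^∞ ( (cosh t) (sinh t)^{-s-1} - t^{-s-1} ) dt = 0. -/
/-!
For `δ > 0` the substitution `u = sinh t` gives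
`∫_δ^∞ (cosh t (sinh t)^{-s-1} - t^{-s-1}) dt = s⁻¹ ((sinh δ)^{-s} - δ^{-s})`, and
`1 - t / sinh t ≤ t²` makes the right side `O(δ^{2-s})`. The integrand splits as
`(cosh t - 1)(sinh t)^{-s-1} - (t^{-s-1} - (sinh t)^{-s-1})`, two nonnegative functions that are
`O(t^{1-s})` near `0` and integrable at `∞`, so letting `δ → 0` gives `c₁ - c₂ = 0`.
-/

open MeasureTheory Real Filter Set Topology

namespace Real

lemma sinh_le_mul_cosh {t : ℝ} (ht : 0 ≤ t) : sinh t ≤ t * cosh t := by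
  have := (convex_Icc 0 t).image_sub_le_mul_sub_of_deriv_le continuous_sinh.continuousOn
    differentiable_sinh.differentiableOn (C := cosh t) (fun x hx => by
      rw [interior_Icc] at hx
      rw [deriv_sinh, cosh_le_cosh, abs_of_pos hx.1, abs_of_nonneg ht]
      exact hx.2.le) 0 (left_mem_Icc.2 ht) t (right_mem_Icc.2 ht) ht
  simpa [mul_comm] using this

lemma cosh_sub_one_le_mul_sinh {t : ℝ} (ht : 0 ≤ t) : cosh t - 1 ≤ t * sinh t := by
  have := (convex_Icc 0 t).image_sub_le_mul_sub_of_deriv_le continuous_cosh.continuousOn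
    differentiable_cosh.differentiableOn (C := sinh t) (fun x hx => by
      rw [interior_Icc] at hx
      rw [deriv_cosh, sinh_le_sinh]
      exact hx.2.le) 0 (left_mem_Icc.2 ht) t (right_mem_Icc.2 ht) ht
  simpa [mul_comm] using this

lemma div_sinh_le_one {t : ℝ} (ht : 0 < t) : t / sinh t ≤ 1 :=
  div_le_one_of_le₀ (self_le_sinh_iff.2 ht.le) (sinh_pos_iff.2 ht).le

lemma one_sub_div_sinh_le_sq {t : ℝ} (ht : 0 < t) : 1 - t / sinh t ≤ t ^ 2 := by
  have hS := sinh_pos_iff.2 ht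
  rw [one_sub_div hS.ne', div_le_iff₀ hS]
  nlinarith [sinh_le_mul_cosh ht.le, cosh_sub_one_le_mul_sinh ht.le]

lemma tendsto_sinh_atTop : Tendsto sinh atTop atTop :=
  tendsto_atTop_mono' atTop ((eventually_ge_atTop 0).mono fun _ hx => self_le_sinh_iff.2 hx)
    tendsto_id

lemma sinh_rpow_le_rpow_of_nonpos {t p : ℝ} (ht : 0 < t) (hp : p ≤ 0) : sinh t ^ p ≤ t ^ p :=
  rpow_le_rpow_of_nonpos ht (self_le_sinh_iff.2 ht.le) hp

lemma rpow_neg_sub_sinh_rpow_neg {t : ℝ} (ht : 0 < t) (p : ℝ) :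
    t ^ (-p) - sinh t ^ (-p) = (1 - (t / sinh t) ^ p) * t ^ (-p) := by
  have hS := sinh_pos_iff.2 ht
  rw [div_rpow ht.le hS.le, rpow_neg ht.le, rpow_neg hS.le]
  have := (rpow_pos_of_pos ht p).ne'
  field_simp

lemma rpow_neg_sub_sinh_rpow_neg_le {t p : ℝ} (ht : 0 < t) (hp : 0 ≤ p) :
    t ^ (-p) - sinh t ^ (-p) ≤ (p + 1) * t ^ (2 - p) := by
  set x := t / sinh t
  have hx0 : 0 ≤ x := div_nonneg ht.le (sinh_pos_iff.2 ht).le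
  have hx1 : x ≤ 1 := div_sinh_le_one ht
  -- Bernoulli's inequality, after lowering `x ^ p` to `x ^ (p + 1)`
  have hbern : 1 - x ^ p ≤ (p + 1) * (1 - x) := by
    have h := one_add_mul_self_le_rpow_one_add (s := x - 1) (by linarith) (p := p + 1)
      (by linarith)
    have hmono : x ^ (p + 1) ≤ x ^ p := rpow_le_rpow_of_exponent_ge' hx0 hx1 hp (by linarith)
    simp only [add_sub_cancel] at h
    linarith
  have htp := (rpow_pos_of_pos ht (-p)).le
  calc t ^ (-p) - sinh t ^ (-p) = (1 - x ^ p) * t ^ (-p) := rpow_neg_sub_sinh_rpow_neg ht p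
    _ ≤ (p + 1) * t ^ 2 * t ^ (-p) := by
        gcongr
        exact hbern.trans (mul_le_mul_of_nonneg_left (one_sub_div_sinh_le_sq ht) (by linarith))
    _ = (p + 1) * t ^ (2 - p) := by
        rw [mul_assoc, ← rpow_natCast, ← rpow_add ht, Nat.cast_ofNat, sub_eq_add_neg]

lemma cosh_sub_one_mul_sinh_rpow_le {t s : ℝ} (ht : 0 < t) (hs : 0 ≤ s) :
    (cosh t - 1) * sinh t ^ (-s - 1) ≤ t ^ (1 - s) := by
  have hS := sinh_pos_iff.2 ht
  calc (cosh t - 1) * sinh t ^ (-s - 1) ≤ t * sinh t * sinh t ^ (-s - 1) := by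
        gcongr
        exact cosh_sub_one_le_mul_sinh ht.le
    _ = t * sinh t ^ (-s) := by
        rw [rpow_sub_one hS.ne']
        field_simp
    _ ≤ t * t ^ (-s) :=
        mul_le_mul_of_nonneg_left (sinh_rpow_le_rpow_of_nonpos ht (neg_nonpos.2 hs)) ht.le
    _ = t ^ (1 - s) := by rw [sub_eq_add_neg, rpow_add ht, rpow_one]

end Real

lemma HasDerivAt.neg_inv_mul_rpow_neg {u : ℝ → ℝ} {u' s t : ℝ} (hs : s ≠ 0)
    (hu : HasDerivAt u u' t) (hpos : 0 < u t) :
    HasDerivAt (fun x => -s⁻¹ * u x ^ (-s)) (u' * u t ^ (-s - 1)) t := by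
  refine ((hu.rpow_const (p := -s) (Or.inl hpos.ne')).const_mul (-s⁻¹)).congr_deriv ?_
  field_simp

lemma integrableOn_Ioi_zero_of_norm_le {f g : ℝ → ℝ} {C r : ℝ} (hr : -1 < r)
    (hf : ContinuousOn f (Ioi 0)) (hf₀ : ∀ t ∈ Ioc (0 : ℝ) 1, ‖f t‖ ≤ C * t ^ r)
    (hg : IntegrableOn g (Ioi 1)) (hf₁ : ∀ t ∈ Ioi (1 : ℝ), ‖f t‖ ≤ g t) :
    IntegrableOn f (Ioi 0) := by
  have hC : IntegrableOn (fun t => C * t ^ r) (Ioc 0 1) :=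
    ((intervalIntegrable_iff_integrableOn_Ioc_of_le zero_le_one).1
      (intervalIntegral.intervalIntegrable_rpow' hr)).const_mul C
  rw [← Ioc_union_Ioi_eq_Ioi zero_le_one]
  refine IntegrableOn.union ?_ ?_
  · exact hC.mono' ((hf.mono Ioc_subset_Ioi_self).aestronglyMeasurable measurableSet_Ioc)
      ((ae_restrict_iff' measurableSet_Ioc).2 (Eventually.of_forall hf₀))
  · exact hg.mono'
      ((hf.mono (Ioi_subset_Ioi zero_le_one)).aestronglyMeasurable measurableSet_Ioi)
      ((ae_restrict_iff' measurableSet_Ioi).2 (Eventually.of_forall hf₁))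

section

variable {s : ℝ}

lemma integrableOn_cosh_mul_sinh_rpow (hs : 0 < s) {a : ℝ} (ha : 0 < a) :
    IntegrableOn (fun t => cosh t * sinh t ^ (-s - 1)) (Ioi a) := by
  refine integrableOn_Ioi_deriv_of_nonneg' (g := fun t => -s⁻¹ * sinh t ^ (-s))
    (l := -s⁻¹ * 0) (fun t ht => (hasDerivAt_sinh t).neg_inv_mul_rpow_neg hs.ne'
      (sinh_pos_iff.2 (ha.trans_le ht))) (fun t ht => ?_)
    (((tendsto_rpow_neg_atTop hs).comp tendsto_sinh_atTop).const_mul _)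
  have := sinh_pos_iff.2 (ha.trans ht)
  have := cosh_pos t
  positivity

lemma integrableOn_cosh_sub_one_mul_sinh_rpow (hs : 0 < s) (hs₂ : s < 2) :
    IntegrableOn (fun t => (cosh t - 1) * sinh t ^ (-s - 1)) (Ioi 0) := by
  have hnonneg (t : ℝ) (ht : 0 < t) : ‖(cosh t - 1) * sinh t ^ (-s - 1)‖ =
      (cosh t - 1) * sinh t ^ (-s - 1) :=
    norm_of_nonneg (mul_nonneg (sub_nonneg.2 (one_le_cosh t))
      (rpow_pos_of_pos (sinh_pos_iff.2 ht) _).le)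
  refine integrableOn_Ioi_zero_of_norm_le (C := 1) (r := 1 - s) (by linarith)
    ((continuous_cosh.sub continuous_const).continuousOn.mul
      (continuous_sinh.continuousOn.rpow_const fun _ ht => Or.inl (sinh_pos_iff.2 ht).ne'))
    (fun t ht => ?_) (integrableOn_cosh_mul_sinh_rpow hs one_pos) (fun t ht => ?_)
  · rw [hnonneg t ht.1, one_mul]
    exact cosh_sub_one_mul_sinh_rpow_le ht.1 hs.le
  · have ht₀ : (0 : ℝ) < t := one_pos.trans ht
    rw [hnonneg t ht₀]
    exact mul_le_mul_of_nonneg_right (by linarith) (rpow_pos_of_pos (sinh_pos_iff.2 ht₀) _).le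

lemma integrableOn_rpow_sub_sinh_rpow (hs : 0 < s) (hs₂ : s < 2) :
    IntegrableOn (fun t => t ^ (-s - 1) - sinh t ^ (-s - 1)) (Ioi 0) := by
  have hnonneg (t : ℝ) (ht : 0 < t) : ‖t ^ (-s - 1) - sinh t ^ (-s - 1)‖ =
      t ^ (-s - 1) - sinh t ^ (-s - 1) :=
    norm_of_nonneg (sub_nonneg.2 (sinh_rpow_le_rpow_of_nonpos ht (by linarith)))
  refine integrableOn_Ioi_zero_of_norm_le (C := s + 2) (r := 1 - s) (by linarith)
    ((continuousOn_id.rpow_const fun _ ht => Or.inl (ne_of_gt ht)).sub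
      (continuous_sinh.continuousOn.rpow_const fun _ ht => Or.inl (sinh_pos_iff.2 ht).ne'))
    (fun t ht => ?_) (integrableOn_Ioi_rpow_of_lt (a := -s - 1) (by linarith) one_pos)
    (fun t ht => ?_)
  · have h := rpow_neg_sub_sinh_rpow_neg_le ht.1 (p := s + 1) (by linarith)
    rw [neg_add', (by ring : 2 - (s + 1) = 1 - s), add_assoc, one_add_one_eq_two] at h
    rwa [hnonneg t ht.1]
  · have ht₀ : (0 : ℝ) < t := one_pos.trans ht
    rw [hnonneg t ht₀]
    linarith [rpow_pos_of_pos (sinh_pos_iff.2 ht₀) (-s - 1)]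

lemma integrableOn_cosh_mul_sinh_rpow_sub_rpow (hs : 0 < s) (hs₂ : s < 2) :
    IntegrableOn (fun t => cosh t * sinh t ^ (-s - 1) - t ^ (-s - 1)) (Ioi 0) :=
  ((integrableOn_cosh_sub_one_mul_sinh_rpow hs hs₂).sub
    (integrableOn_rpow_sub_sinh_rpow hs hs₂)).congr_fun
      (fun _ _ => by simp only [Pi.sub_apply]; ring) measurableSet_Ioi

lemma hasDerivAt_rpow_neg_sub_sinh_rpow_neg (hs : s ≠ 0) {t : ℝ} (ht : 0 < t) :
    HasDerivAt (fun x => s⁻¹ * (x ^ (-s) - sinh x ^ (-s)))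
      (cosh t * sinh t ^ (-s - 1) - t ^ (-s - 1)) t := by
  have h := ((hasDerivAt_sinh t).neg_inv_mul_rpow_neg hs (sinh_pos_iff.2 ht)).sub
    ((hasDerivAt_id t).neg_inv_mul_rpow_neg hs ht)
  simp only [id, one_mul] at h
  exact h.congr_of_eventuallyEq (Eventually.of_forall fun x => by simp only [Pi.sub_apply]; ring)

lemma tendsto_rpow_neg_sub_sinh_rpow_neg_atTop (hs : 0 < s) :
    Tendsto (fun t => s⁻¹ * (t ^ (-s) - sinh t ^ (-s))) atTop (𝓝 0) := by
  simpa using ((tendsto_rpow_neg_atTop hs).sub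
    ((tendsto_rpow_neg_atTop hs).comp tendsto_sinh_atTop)).const_mul s⁻¹

lemma tendsto_rpow_neg_sub_sinh_rpow_neg_nhdsGT_zero (hs : 0 < s) (hs₂ : s < 2) :
    Tendsto (fun t => s⁻¹ * (t ^ (-s) - sinh t ^ (-s))) (𝓝[>] 0) (𝓝 0) := by
  have hbound : Tendsto (fun t => s⁻¹ * ((s + 1) * t ^ (2 - s))) (𝓝[>] 0) (𝓝 0) := by
    have := ((continuousAt_rpow_const 0 (2 - s) (Or.inr (by linarith))).tendsto).const_mul (s + 1)
    simpa [zero_rpow (by linarith : 2 - s ≠ 0)] using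
      (this.const_mul s⁻¹).mono_left nhdsWithin_le_nhds
  refine squeeze_zero' ?_ ?_ hbound <;> filter_upwards [self_mem_nhdsWithin] with t ht
  · exact mul_nonneg (inv_nonneg.2 hs.le)
      (sub_nonneg.2 (sinh_rpow_le_rpow_of_nonpos ht (by linarith)))
  · exact mul_le_mul_of_nonneg_left (rpow_neg_sub_sinh_rpow_neg_le ht hs.le) (inv_nonneg.2 hs.le)

lemma integral_Ioi_cosh_mul_sinh_rpow_sub_rpow (hs : 0 < s) (hs₂ : s < 2) {a : ℝ}
    (ha : 0 ≤ a) :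
    ∫ t in Ioi a, (cosh t * sinh t ^ (-s - 1) - t ^ (-s - 1)) =
      s⁻¹ * (sinh a ^ (-s) - a ^ (-s)) := by
  have hcont : ContinuousWithinAt (fun x => s⁻¹ * (x ^ (-s) - sinh x ^ (-s))) (Ici a) a := by
    rcases ha.eq_or_lt with rfl | ha
    -- the primitive is `0` at `0` because of the convention `0 ^ (-s) = 0`
    · refine continuousWithinAt_Ioi_iff_Ici.1 ?_
      simpa [ContinuousWithinAt, zero_rpow (neg_ne_zero.2 hs.ne')] using
        tendsto_rpow_neg_sub_sinh_rpow_neg_nhdsGT_zero hs hs₂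
    · exact (hasDerivAt_rpow_neg_sub_sinh_rpow_neg hs.ne' ha).continuousAt.continuousWithinAt
  rw [integral_Ioi_of_hasDerivAt_of_tendsto hcont
    (fun t ht => hasDerivAt_rpow_neg_sub_sinh_rpow_neg hs.ne' (ha.trans_lt ht))
    ((integrableOn_cosh_mul_sinh_rpow_sub_rpow hs hs₂).mono_set (Ioi_subset_Ioi ha))
    (tendsto_rpow_neg_sub_sinh_rpow_neg_atTop hs)]
  ring

end

/-- The identity `c₁ = c₂` from the proof of Theorem 3.2:
`∫_0^∞ (cosh t - 1)(sinh t)^{-s-1} dt = ∫_0^∞ (1 - (t/sinh t)^{s+1}) t^{-s-1} dt`,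
both integrals being absolutely convergent; equivalently,
`lim_{δ → 0⁺} ∫_δ^∞ ((cosh t)(sinh t)^{-s-1} - t^{-s-1}) dt = 0`. -/
theorem c1_eq_c2 (s : ℝ) (hs0 : 0 < s) (hs1 : s < 1) :
    IntegrableOn (fun t : ℝ => (Real.cosh t - 1) * (Real.sinh t) ^ (-s - 1))
      (Set.Ioi (0 : ℝ)) ∧
    IntegrableOn (fun t : ℝ => (1 - (t / Real.sinh t) ^ (s + 1)) * t ^ (-s - 1))
      (Set.Ioi (0 : ℝ)) ∧
    (∫ t in Set.Ioi (0 : ℝ), (Real.cosh t - 1) * (Real.sinh t) ^ (-s - 1)) =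
      (∫ t in Set.Ioi (0 : ℝ), (1 - (t / Real.sinh t) ^ (s + 1)) * t ^ (-s - 1)) ∧
    Tendsto
      (fun δ : ℝ => ∫ t in Set.Ioi δ,
        (Real.cosh t * (Real.sinh t) ^ (-s - 1) - t ^ (-s - 1)))
      (nhdsWithin 0 (Set.Ioi (0 : ℝ))) (nhds 0) := by
  have hs₂ : s < 2 := by linarith
  have h₁ := integrableOn_cosh_sub_one_mul_sinh_rpow hs0 hs₂
  have h₂ := integrableOn_rpow_sub_sinh_rpow hs0 hs₂
  have hf₂ : EqOn (fun t => t ^ (-s - 1) - sinh t ^ (-s - 1))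
      (fun t => (1 - (t / sinh t) ^ (s + 1)) * t ^ (-s - 1)) (Ioi 0) := fun t ht => by
    rw [show -s - 1 = -(s + 1) by ring]
    exact rpow_neg_sub_sinh_rpow_neg ht (s + 1)
  refine ⟨h₁, h₂.congr_fun hf₂ measurableSet_Ioi, ?_, ?_⟩
  · rw [← setIntegral_congr_fun measurableSet_Ioi hf₂, ← sub_eq_zero,
      ← integral_sub h₁ h₂]
    calc _ = ∫ t in Ioi 0, (cosh t * sinh t ^ (-s - 1) - t ^ (-s - 1)) :=
          setIntegral_congr_fun measurableSet_Ioi fun t _ => by ring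
      _ = 0 := by
          rw [integral_Ioi_cosh_mul_sinh_rpow_sub_rpow hs0 hs₂ le_rfl, sinh_zero,
            zero_rpow (neg_ne_zero.2 hs0.ne'), sub_self, mul_zero]
  · have h := (tendsto_rpow_neg_sub_sinh_rpow_neg_nhdsGT_zero hs0 hs₂).neg
    rw [neg_zero] at h
    refine h.congr' ?_
    filter_upwards [self_mem_nhdsWithin] with δ hδ
    rw [integral_Ioi_cosh_mul_sinh_rpow_sub_rpow hs0 hs₂ (le_of_lt hδ)]
    ring
end
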